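/- Let p, q ∈ P_d with all entries of p and q strictly positive, and let m = p ∧ q be their meet (whose entries are then also strictly positive). Then the Vidal recursion for the pair (p, m) coincides with the Vidal recursion for the pair (p, q): they have the same termination index k, the same indices l_j for all j ∈ {0, …, k}, and the same ratios r_j for all j ∈ {1, …, k}. -/
import Mathlib


open Finset

noncomputable section

/-- Prefix sum of the first `k` entries of `x` (1-based: `x_1 + ⋯ + x_k`). -/
def pfx (d : ℕ) (x : Fin d → ℝ) (k : ℕ) : ℝ :=
  ∑ i : Fin d, if (i : ℕ) < k then x i else 0

/-- Tail sum `E_l(x) = ∑_{i=l}^d x_i` for 1-based `l ∈ {1,…,d}`; `E_{d+1}(x) = 0`. -/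
def Etail (d : ℕ) (x : Fin d → ℝ) (l : ℕ) : ℝ :=
  ∑ i : Fin d, if l ≤ (i : ℕ) + 1 then x i else 0

/-- Membership in `P_d`: decreasingly ordered, nonnegative, summing to 1. -/
def memP (d : ℕ) (x : Fin d → ℝ) : Prop :=
  (∀ i j : Fin d, i ≤ j → x j ≤ x i) ∧ (∀ i, 0 ≤ x i) ∧ (∑ i, x i) = 1

/-- Majorization `x ≺ y`: all partial sums of `x` bounded by those of `y`, equal total sum. -/
def Maj (d : ℕ) (x y : Fin d → ℝ) : Prop :=
  (∀ k : ℕ, k < d → pfx d x k ≤ pfx d y k) ∧ pfx d x d = pfx d y d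

/-- The meet `p ∧ q` of the majorization lattice, defined componentwise. -/
def meet (d : ℕ) (p q : Fin d → ℝ) : Fin d → ℝ :=
  fun i => min (pfx d p ((i : ℕ) + 1)) (pfx d q ((i : ℕ) + 1))
         - min (pfx d p (i : ℕ)) (pfx d q (i : ℕ))

/-- The ratio `(E_l(p) − E_L(p)) / (E_l(q) − E_L(q))` of the Vidal recursion. -/
def ratio (d : ℕ) (p q : Fin d → ℝ) (L l : ℕ) : ℝ :=
  (Etail d p l - Etail d p L) / (Etail d q l - Etail d q L)

/-- The smallest minimizer of `l ↦ ratio d p q L l` over `l ∈ {1,…,L−1}`. -/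
def nextIdx (d : ℕ) (p q : Fin d → ℝ) (L : ℕ) : ℕ :=
  sInf {l | l ∈ Finset.Icc 1 (L - 1) ∧
        ∀ l' ∈ Finset.Icc 1 (L - 1), ratio d p q L l ≤ ratio d p q L l'}

/-- Sequence of indices `l_j` of the Vidal recursion: `l_0 = d+1`,
`l_j` = smallest minimizer of the ratio over `{1,…,l_{j−1}−1}`. -/
def lSeq (d : ℕ) (p q : Fin d → ℝ) : ℕ → ℕ
  | 0 => d + 1
  | j + 1 => nextIdx d p q (lSeq d p q j)

/-- Ratios `r_j` of the Vidal recursion (meaningful for `j ≥ 1`):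
`r_j = (E_{l_j}(p) − E_{l_{j−1}}(p)) / (E_{l_j}(q) − E_{l_{j−1}}(q))`. -/
def rSeq (d : ℕ) (p q : Fin d → ℝ) (j : ℕ) : ℝ :=
  ratio d p q (lSeq d p q (j - 1)) (lSeq d p q j)


lemma pfx_zero (d : ℕ) (x : Fin d → ℝ) : pfx d x 0 = 0 := by simp [pfx]

lemma pfx_succ (d : ℕ) (x : Fin d → ℝ) {k : ℕ} (hk : k < d) :
    pfx d x (k + 1) = pfx d x k + x ⟨k, hk⟩ := by
  have h : ∀ i : Fin d, (if (i : ℕ) < k + 1 then x i else 0)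
      = (if (i : ℕ) < k then x i else 0) + (if i = ⟨k, hk⟩ then x i else 0) := by
    intro i
    rcases lt_trichotomy (i : ℕ) k with h | h | h
    · rw [if_pos (by omega), if_pos h, if_neg (by simp [Fin.ext_iff]; omega)]; ring
    · rw [if_pos (by omega), if_neg (by omega), if_pos (by simp [Fin.ext_iff, h])]; ring
    · rw [if_neg (by omega), if_neg (by omega), if_neg (by simp [Fin.ext_iff]; omega)]; ring
  rw [pfx, pfx]
  simp_rw [h, Finset.sum_add_distrib, Finset.sum_ite_eq' Finset.univ, Finset.mem_univ, if_pos]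

lemma pfx_full (d : ℕ) (x : Fin d → ℝ) : pfx d x d = ∑ i, x i := by
  unfold pfx; apply Finset.sum_congr rfl; intro i _; rw [if_pos i.isLt]

lemma pfx_nonneg (d : ℕ) (x : Fin d → ℝ) (hx : ∀ i, 0 ≤ x i) (k : ℕ) : 0 ≤ pfx d x k := by
  apply Finset.sum_nonneg; intro i _; split
  · exact hx i
  · exact le_refl 0

lemma pfx_lt (d : ℕ) (x : Fin d → ℝ) (hx : ∀ i, 0 < x i) {k1 k2 : ℕ}
    (h : k1 < k2) (h2 : k2 ≤ d) : pfx d x k1 < pfx d x k2 := by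
  induction k2 with
  | zero => omega
  | succ n ih =>
    have hn : n < d := by omega
    rw [pfx_succ d x hn]
    rcases Nat.lt_or_ge k1 n with h' | h'
    · have := ih h' (by omega); have := hx ⟨n, hn⟩; linarith
    · have : k1 = n := by omega
      subst this; have := hx ⟨k1, hn⟩; linarith

lemma Etail_sub (d : ℕ) (x : Fin d → ℝ) {l L : ℕ} (hl : 1 ≤ l) (hL : 1 ≤ L) :
    Etail d x l - Etail d x L = pfx d x (L - 1) - pfx d x (l - 1) := by
  have key : ∀ m : ℕ, 1 ≤ m → Etail d x m + pfx d x (m - 1) = ∑ i, x i := by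
    intro m hm
    rw [Etail, pfx, ← Finset.sum_add_distrib]
    apply Finset.sum_congr rfl
    intro i _
    by_cases h : m ≤ (i : ℕ) + 1
    · rw [if_pos h, if_neg (by omega)]; ring
    · rw [if_neg h, if_pos (by omega)]; ring
  have h1 := key l hl
  have h2 := key L hL
  linarith

lemma meet_pfx (d : ℕ) (p q : Fin d → ℝ) {k : ℕ} (hk : k ≤ d) :
    pfx d (meet d p q) k = min (pfx d p k) (pfx d q k) := by
  induction k with
  | zero => simp [pfx_zero]
  | succ n ih =>
    rw [pfx_succ d _ (by omega : n < d), ih (by omega)]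
    show _ + (min (pfx d p (n+1)) (pfx d q (n+1)) - min (pfx d p n) (pfx d q n)) = _
    ring

lemma ratio_eq (d : ℕ) (x y : Fin d → ℝ) {L l : ℕ} (hl : 1 ≤ l) (hL : 1 ≤ L) :
    ratio d x y L l
      = (pfx d x (L - 1) - pfx d x (l - 1)) / (pfx d y (L - 1) - pfx d y (l - 1)) := by
  rw [ratio, Etail_sub d x hl hL, Etail_sub d y hl hL]

lemma meet_pos (d : ℕ) (p q : Fin d → ℝ) (hppos : ∀ i, 0 < p i) (hqpos : ∀ i, 0 < q i)
    (i : Fin d) : 0 < meet d p q i := by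
  have h1 : pfx d p ((i : ℕ) + 1) = pfx d p i + p i := by
    rw [pfx_succ d p i.isLt]
  have h2 : pfx d q ((i : ℕ) + 1) = pfx d q i + q i := by
    rw [pfx_succ d q i.isLt]
  have hm : min (pfx d p i) (pfx d q i) + min (p i) (q i)
      ≤ min (pfx d p i + p i) (pfx d q i + q i) :=
    le_min (add_le_add (min_le_left _ _) (min_le_left _ _))
      (add_le_add (min_le_right _ _) (min_le_right _ _))
  have := lt_min (hppos i) (hqpos i)
  unfold meet
  rw [h1, h2]
  linarith


lemma vidal_step (d : ℕ) (p q : Fin d → ℝ)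
    (hppos : ∀ i, 0 < p i) (hqpos : ∀ i, 0 < q i)
    {L : ℕ} (hL2 : 2 ≤ L) (hLd : L ≤ d + 1)
    (hinv : pfx d q (L - 1) ≤ pfx d p (L - 1)) :
    nextIdx d p (meet d p q) L = nextIdx d p q L ∧
    1 ≤ nextIdx d p q L ∧ nextIdx d p q L ≤ L - 1 ∧
    ratio d p (meet d p q) L (nextIdx d p q L) = ratio d p q L (nextIdx d p q L) ∧
    pfx d q (nextIdx d p q L - 1) ≤ pfx d p (nextIdx d p q L - 1) := by
  set m := meet d p q with hm
  set S := Finset.Icc 1 (L - 1) with hSdef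
  have hS1 : (1 : ℕ) ∈ S := by simp [hSdef, Finset.mem_Icc]; omega
  -- basic facts for l ∈ S
  have hmem : ∀ l ∈ S, 1 ≤ l ∧ l ≤ L - 1 := by
    intro l hl; rw [hSdef, Finset.mem_Icc] at hl; exact hl
  have hLd' : L - 1 ≤ d := by omega
  -- ratio formulas
  have hfq : ∀ l ∈ S, ratio d p q L l
      = (pfx d p (L-1) - pfx d p (l-1)) / (pfx d q (L-1) - pfx d q (l-1)) := by
    intro l hl; exact ratio_eq d p q (hmem l hl).1 (by omega)
  have hfm : ∀ l ∈ S, ratio d p m L l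
      = (pfx d p (L-1) - pfx d p (l-1))
        / (pfx d q (L-1) - min (pfx d p (l-1)) (pfx d q (l-1))) := by
    intro l hl
    obtain ⟨hl1, hl2⟩ := hmem l hl
    rw [ratio_eq d p m hl1 (by omega), hm, meet_pfx d p q hLd',
      meet_pfx d p q (by omega : l - 1 ≤ d), min_eq_right hinv]
  -- positivity facts
  have ha : ∀ l ∈ S, 0 < pfx d p (L-1) - pfx d p (l-1) := by
    intro l hl; obtain ⟨hl1, hl2⟩ := hmem l hl
    have := pfx_lt d p hppos (show l - 1 < L - 1 by omega) hLd'; linarith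
  have hb : ∀ l ∈ S, 0 < pfx d q (L-1) - pfx d q (l-1) := by
    intro l hl; obtain ⟨hl1, hl2⟩ := hmem l hl
    have := pfx_lt d q hqpos (show l - 1 < L - 1 by omega) hLd'; linarith
  have hc : ∀ l ∈ S, 0 < pfx d q (L-1) - min (pfx d p (l-1)) (pfx d q (l-1)) := by
    intro l hl
    have := hb l hl
    have := min_le_right (pfx d p (l-1)) (pfx d q (l-1))
    linarith
  -- (i) ratio_m ≤ ratio_q
  have hfg : ∀ l ∈ S, ratio d p m L l ≤ ratio d p q L l := by
    intro l hl
    rw [hfq l hl, hfm l hl]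
    rw [div_le_div_iff₀ (hc l hl) (hb l hl)]
    have h1 := min_le_right (pfx d p (l-1)) (pfx d q (l-1))
    nlinarith [ha l hl, hb l hl]
  -- (ii) if P(l-1) < Q(l-1) then f 1 ≤ g l
  have hkey : ∀ l ∈ S, pfx d p (l-1) < pfx d q (l-1) → ratio d p q L 1 ≤ ratio d p m L l := by
    intro l hl hpq
    rw [hfq 1 hS1, hfm l hl, min_eq_left (le_of_lt hpq)]
    simp only [Nat.sub_self, pfx_zero, sub_zero]
    set A := pfx d p (L-1)
    set B := pfx d q (L-1)
    set t := pfx d p (l-1) with ht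
    have hBt : 0 < B - t := by
      have := hc l hl; rw [min_eq_left (le_of_lt hpq)] at this; linarith
    have hB : 0 < B := by
      have := hb 1 hS1; simp [pfx_zero] at this; linarith
    have ht0 : 0 ≤ t := pfx_nonneg d p (fun i => le_of_lt (hppos i)) _
    rw [div_le_div_iff₀ hB hBt]
    nlinarith [hinv]
  -- (iii) if Q(l-1) ≤ P(l-1) then g l = f l
  have heq : ∀ l ∈ S, pfx d q (l-1) ≤ pfx d p (l-1) → ratio d p m L l = ratio d p q L l := by
    intro l hl h
    rw [hfq l hl, hfm l hl, min_eq_right h]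
  have hg1 : ratio d p m L 1 = ratio d p q L 1 := heq 1 hS1 (by simp [pfx_zero])
  -- the minimizer set for q
  set T := {l | l ∈ S ∧ ∀ l' ∈ S, ratio d p q L l ≤ ratio d p q L l'} with hT
  have hTne : T.Nonempty := by
    obtain ⟨l0, hl0S, hl0⟩ := Finset.exists_min_image S (fun l => ratio d p q L l) ⟨1, hS1⟩
    exact ⟨l0, hl0S, hl0⟩
  have hnq : nextIdx d p q L = sInf T := rfl
  set ls := sInf T with hls
  obtain ⟨hlsS, hlsmin⟩ : ls ∈ T := Nat.sInf_mem hTne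
  have hstrict : ∀ l ∈ S, l < ls → ratio d p q L ls < ratio d p q L l := by
    intro l hl hlt
    by_contra h
    push_neg at h
    have : l ∈ T := ⟨hl, fun l' hl' => le_trans h (hlsmin l' hl')⟩
    have := Nat.sInf_le this
    omega
  -- invariant at ls
  have hQPs : pfx d q (ls - 1) ≤ pfx d p (ls - 1) := by
    by_contra h
    push_neg at h
    have h1 : ratio d p m L ls < ratio d p q L ls := by
      rw [hfq ls hlsS, hfm ls hlsS, min_eq_left (le_of_lt h)]
      have hc' := hc ls hlsS
      rw [min_eq_left (le_of_lt h)] at hc'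
      rw [div_lt_div_iff₀ hc' (hb ls hlsS)]
      nlinarith [ha ls hlsS, hb ls hlsS]
    have h2 := hkey ls hlsS h
    have h3 := hlsmin 1 hS1
    linarith
  have hgfs : ratio d p m L ls = ratio d p q L ls := heq ls hlsS hQPs
  -- g-minimality of ls
  have hgmin : ∀ l ∈ S, ratio d p m L ls ≤ ratio d p m L l := by
    intro l hl
    rcases le_or_gt (pfx d q (l-1)) (pfx d p (l-1)) with h | h
    · rw [heq l hl h, hgfs]; exact hlsmin l hl
    · have := hkey l hl h
      have := hlsmin 1 hS1
      linarith
  have hgstrict : ∀ l ∈ S, l < ls → ratio d p m L ls < ratio d p m L l := by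
    intro l hl hlt
    have h1lt : 1 < ls := lt_of_le_of_lt (hmem l hl).1 hlt
    have hf1 : ratio d p q L ls < ratio d p q L 1 := hstrict 1 hS1 h1lt
    rcases le_or_gt (pfx d q (l-1)) (pfx d p (l-1)) with h | h
    · rw [heq l hl h, hgfs]; exact hstrict l hl hlt
    · have := hkey l hl h
      rw [hgfs]
      linarith
  -- conclude nextIdx equal
  have hnm : nextIdx d p m L = ls := by
    have hTm : ls ∈ {l | l ∈ S ∧ ∀ l' ∈ S, ratio d p m L l ≤ ratio d p m L l'} :=
      ⟨hlsS, hgmin⟩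
    apply le_antisymm (Nat.sInf_le hTm)
    obtain ⟨hsS, hsmin⟩ := Nat.sInf_mem ⟨ls, hTm⟩
    by_contra h
    push_neg at h
    have := hgstrict _ hsS h
    have := hsmin ls hlsS
    linarith
  obtain ⟨hls1, hls2⟩ := hmem ls hlsS
  rw [hnq]
  exact ⟨hnm, hls1, hls2, hgfs, hQPs⟩

/-- the Vidal recursion for the pair `(p, p ∧ q)` coincides with the Vidal
recursion for `(p, q)`: the meet has strictly positive entries, the indices `l_j` agree
for all `j ≤ k`, the ratios `r_j` agree for all `1 ≤ j ≤ k`, and the termination index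
is the same `k`. -/
theorem vidal_recursion_meet_eq (d : ℕ) (hd : 1 ≤ d) (p q : Fin d → ℝ)
    (hp : memP d p) (hq : memP d q)
    (hppos : ∀ i, 0 < p i) (hqpos : ∀ i, 0 < q i)
    (k : ℕ) (hk : lSeq d p q k = 1) (hk' : ∀ j < k, lSeq d p q j ≠ 1) :
    (∀ i, 0 < meet d p q i) ∧
    (∀ j ≤ k, lSeq d p (meet d p q) j = lSeq d p q j) ∧
    (∀ j, 1 ≤ j → j ≤ k → rSeq d p (meet d p q) j = rSeq d p q j) ∧
    lSeq d p (meet d p q) k = 1 ∧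
    (∀ j < k, lSeq d p (meet d p q) j ≠ 1) := by
  have main : ∀ j, j ≤ k →
      lSeq d p (meet d p q) j = lSeq d p q j ∧
      pfx d q (lSeq d p q j - 1) ≤ pfx d p (lSeq d p q j - 1) ∧
      1 ≤ lSeq d p q j ∧ lSeq d p q j ≤ d + 1 := by
    intro j
    induction j with
    | zero =>
      intro _
      refine ⟨rfl, ?_, by simp [lSeq], by simp [lSeq]⟩
      show pfx d q d ≤ pfx d p d
      rw [pfx_full, pfx_full, hp.2.2, hq.2.2]
    | succ n ih =>
      intro hn
      obtain ⟨h1, h2, h3, h4⟩ := ih (by omega)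
      have hne := hk' n (by omega)
      have hL2 : 2 ≤ lSeq d p q n := by omega
      obtain ⟨e1, e2, e3, e4, e5⟩ := vidal_step d p q hppos hqpos hL2 h4 h2
      have hm1 : lSeq d p (meet d p q) (n + 1) = lSeq d p q (n + 1) := by
        show nextIdx d p (meet d p q) (lSeq d p (meet d p q) n)
            = nextIdx d p q (lSeq d p q n)
        rw [h1, e1]
      have hrfl : lSeq d p q (n + 1) = nextIdx d p q (lSeq d p q n) := rfl
      refine ⟨hm1, ?_, ?_, ?_⟩ <;> rw [hrfl]
      · exact e5
      · exact e2
      · omega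
  have hrat : ∀ j, 1 ≤ j → j ≤ k → rSeq d p (meet d p q) j = rSeq d p q j := by
    intro j hj1 hjk
    obtain ⟨h1, h2, h3, h4⟩ := main (j - 1) (by omega)
    have hne := hk' (j - 1) (by omega)
    have hL2 : 2 ≤ lSeq d p q (j - 1) := by omega
    obtain ⟨e1, e2, e3, e4, e5⟩ := vidal_step d p q hppos hqpos hL2 h4 h2
    have hj' : lSeq d p q j = nextIdx d p q (lSeq d p q (j - 1)) := by
      conv_lhs => rw [show j = (j - 1) + 1 by omega]
      rfl
    unfold rSeq
    rw [h1, (main j (by omega)).1, hj']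
    exact e4
  refine ⟨meet_pos d p q hppos hqpos, fun j hj => (main j hj).1, hrat, ?_, ?_⟩
  · rw [(main k le_rfl).1, hk]
  · intro j hj
    rw [(main j (by omega)).1]
    exact hk' j hj


end
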